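/- (Naturality implies minimality among mediators, exact case) If Λ is an exact natural latent over X₁, X₂ (mediates and is a redund), then for any random variable Λ'' such that X₁ ⊥ X₂ | Λ'', Λ is almost surely a deterministic function of Λ''. -/
import Mathlib


open scoped Classical BigOperators

noncomputable section

/-- Probability of an event under a mass function `p` on a finite sample space. -/
def prob {Ω : Type*} [Fintype Ω] (p : Ω → ℝ) (E : Ω → Prop) : ℝ :=
  ∑ ω, if E ω then p ω else 0

/-- `X₁` and `X₂` are conditionally independent given `Λ`. -/
def Mediates {Ω α β γ : Type*} [Fintype Ω]
    (p : Ω → ℝ) (X1 : Ω → α) (X2 : Ω → β) (L : Ω → γ) : Prop :=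
  ∀ x1 x2 l,
    prob p (fun ω => X1 ω = x1 ∧ X2 ω = x2 ∧ L ω = l) * prob p (fun ω => L ω = l)
      = prob p (fun ω => X1 ω = x1 ∧ L ω = l) * prob p (fun ω => X2 ω = x2 ∧ L ω = l)

lemma prob_nonneg {Ω : Type*} [Fintype Ω] (p : Ω → ℝ) (hp : ∀ ω, 0 ≤ p ω)
    (E : Ω → Prop) : 0 ≤ prob p E := by
  apply Finset.sum_nonneg
  intro ω _
  split <;> [exact hp ω; rfl]

lemma prob_pos {Ω : Type*} [Fintype Ω] (p : Ω → ℝ) (hp : ∀ ω, 0 ≤ p ω)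
    (E : Ω → Prop) (ω : Ω) (hω : p ω ≠ 0) (hE : E ω) : 0 < prob p E := by
  have hpos : 0 < p ω := lt_of_le_of_ne (hp ω) (Ne.symm hω)
  have : (if E ω then p ω else 0) ≤ prob p E := by
    apply Finset.single_le_sum (f := fun ω => if E ω then p ω else 0)
    · intro i _; split <;> [exact hp i; rfl]
    · exact Finset.mem_univ ω
  simp [hE] at this
  linarith

/-- Naturality implies minimality among mediators (exact case): if Λ is an exact
natural latent over X₁, X₂, then for any Λ'' mediating between X₁ and X₂,
Λ is almost surely a deterministic function of Λ''. -/
theorem naturality_implies_minimality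
    {Ω α β γ δ : Type*} [Fintype Ω] [Fintype α] [Fintype β]
    (p : Ω → ℝ) (hp : ∀ ω, 0 ≤ p ω) (hsum : ∑ ω, p ω = 1)
    (X1 : Ω → α) (X2 : Ω → β) (L : Ω → γ) (L'' : Ω → δ)
    (hmedL : Mediates p X1 X2 L)
    (f1 : α → γ) (f2 : β → γ)
    (hLf1 : ∀ ω, p ω ≠ 0 → L ω = f1 (X1 ω)) (hLf2 : ∀ ω, p ω ≠ 0 → L ω = f2 (X2 ω))
    (hmedL'' : Mediates p X1 X2 L'') :
    ∃ g : δ → γ, ∀ ω, p ω ≠ 0 → L ω = g (L'' ω) := by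
  -- key claim: L is constant on positive-probability fibers of L''
  have key : ∀ ω ω', p ω ≠ 0 → p ω' ≠ 0 → L'' ω = L'' ω' → L ω = L ω' := by
    intro ω ω' hω hω' hll
    set x1 := X1 ω
    set x2 := X2 ω'
    set l := L'' ω
    have hA : 0 < prob p (fun σ => X1 σ = x1 ∧ L'' σ = l) :=
      prob_pos p hp _ ω hω ⟨rfl, rfl⟩
    have hB : 0 < prob p (fun σ => X2 σ = x2 ∧ L'' σ = l) :=
      prob_pos p hp _ ω' hω' ⟨rfl, hll.symm⟩
    have hmul := hmedL'' x1 x2 l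
    have htriple : 0 < prob p (fun σ => X1 σ = x1 ∧ X2 σ = x2 ∧ L'' σ = l) *
        prob p (fun σ => L'' σ = l) := by
      rw [hmul]; exact mul_pos hA hB
    have htripos : prob p (fun σ => X1 σ = x1 ∧ X2 σ = x2 ∧ L'' σ = l) ≠ 0 := by
      intro h
      rw [h, zero_mul] at htriple
      exact lt_irrefl 0 htriple
    unfold prob at htripos
    obtain ⟨σ, -, hσ⟩ := Finset.exists_ne_zero_of_sum_ne_zero htripos
    by_cases hc : X1 σ = x1 ∧ X2 σ = x2 ∧ L'' σ = l
    · simp [hc] at hσ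
      have e1 : L σ = f1 x1 := by rw [hLf1 σ hσ, hc.1]
      have e2 : L σ = f2 x2 := by rw [hLf2 σ hσ, hc.2.1]
      calc L ω = f1 x1 := hLf1 ω hω
        _ = f2 x2 := by rw [← e1, e2]
        _ = L ω' := (hLf2 ω' hω').symm
    · simp [hc] at hσ
  -- pick a representative
  obtain ⟨ω0, hω0⟩ : ∃ ω, p ω ≠ 0 := by
    by_contra h
    push_neg at h
    rw [Finset.sum_eq_zero (fun ω _ => h ω)] at hsum
    norm_num at hsum
  refine ⟨fun d => if h : ∃ ω, p ω ≠ 0 ∧ L'' ω = d then L h.choose else L ω0, ?_⟩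
  intro ω hω
  have hex : ∃ σ, p σ ≠ 0 ∧ L'' σ = L'' ω := ⟨ω, hω, rfl⟩
  simp only [dif_pos hex]
  exact key ω hex.choose hω hex.choose_spec.1 hex.choose_spec.2.symm
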